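/- Let (Y, F) be a measure-preserving system with a Gibbs measure μ_Φ: there is K > 0 such that K^{-1} ≤ μ_Φ(Z_{τ^k(x)}[x]) / e^{S_k Φ(x)} ≤ K for a.e. x and all k, where τ^k(x) = τ(x) + τ(F x) + ⋯ + τ(F^{k-1} x) and Φ(x) = S_{τ(x)} φ(x) for a bounded function φ. If τ(F^k(x)) ≤ κ log k eventually (a.e. x), then for a.e. x there exists n₀ such that for all n ≥ n₀, n^{-κ'} ≤ μ_Φ(Z_n[x]) / e^{S_n φ(x)} ≤ n^{κ'}, where κ' = κ (sup|φ| + 1). -/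

import Mathlib

/-!
Write `T k = τ^k(x)` for the return times of `x` to the induced system. Since `τ ≥ 1`, every
large `n` lies in a gap `T k < n ≤ T (k + 1)`, and the nesting of cylinders squeezes `μ(Z_n[x])`
between the Gibbs bounds at `T k` and `T (k + 1)`. Moving from `S_{T k} φ` or `S_{T (k+1)} φ` to
`S_n φ` costs at most `sup |φ|` times the gap length `τ(F^k x) ≤ κ log k ≤ κ log n`, i.e. a
factor `n^{κ sup |φ|}`, and for large `n` the Gibbs constant `K` is at most `n^κ`.
-/

open MeasureTheory Filter

section InducedSystem

variable {Y : Type*} {f F : Y → Y} {τ : Y → ℕ}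

theorem iterate_induced_eq_iterate_birkhoffSum (hF : ∀ y, F y = f^[τ y] y) (k : ℕ) (x : Y) :
    F^[k] x = f^[birkhoffSum F τ k x] x := by
  induction k with
  | zero => simp
  | succ k ih =>
    rw [Function.iterate_succ_apply', birkhoffSum_succ, hF, add_comm,
      Function.iterate_add_apply, ← ih]

theorem birkhoffSum_induced {α : Type*} [AddCommMonoid α] (hF : ∀ y, F y = f^[τ y] y)
    {φ Φ : Y → α} (hΦ : ∀ y, Φ y = birkhoffSum f φ (τ y) y) (k : ℕ) (x : Y) :
    birkhoffSum F Φ k x = birkhoffSum f φ (birkhoffSum F τ k x) x := by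
  induction k with
  | zero => simp
  | succ k ih =>
    rw [birkhoffSum_succ, birkhoffSum_succ, birkhoffSum_add, ih, hΦ,
      iterate_induced_eq_iterate_birkhoffSum hF]

end InducedSystem

theorem strictMono_birkhoffSum {Y α : Type*} [AddCommMonoid α] [PartialOrder α]
    [IsOrderedCancelAddMonoid α] (f : Y → Y) {g : Y → α} (hg : ∀ y, 0 < g y) (x : Y) :
    StrictMono fun n => birkhoffSum f g n x :=
  strictMono_nat_of_lt_succ fun n => by
    rw [birkhoffSum_succ]
    exact lt_add_of_pos_right _ (hg _)

theorem norm_birkhoffSum_sub_le {Y E : Type*} [SeminormedAddCommGroup E] (f : Y → Y)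
    {g : Y → E} {M : ℝ} (hg : ∀ y, ‖g y‖ ≤ M) {a b : ℕ} (hab : a ≤ b) (x : Y) :
    ‖birkhoffSum f g b x - birkhoffSum f g a x‖ ≤ M * (b - a) := by
  obtain ⟨c, rfl⟩ := Nat.exists_eq_add_of_le hab
  rw [birkhoffSum_add, add_sub_cancel_left, Nat.cast_add, add_sub_cancel_left, birkhoffSum]
  calc ‖∑ i ∈ Finset.range c, g (f^[i] (f^[a] x))‖
      ≤ ∑ _i ∈ Finset.range c, M := norm_sum_le_of_le _ fun i _ => hg _
    _ = M * c := by rw [Finset.sum_const, Finset.card_range, nsmul_eq_mul, mul_comm]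

theorem StrictMono.exists_between_apply_succ {T : ℕ → ℕ} (hT : StrictMono T) {j n : ℕ}
    (hj : T j < n) : ∃ k, j ≤ k ∧ T k < n ∧ n ≤ T (k + 1) := by
  classical
  have hex : ∃ k, n ≤ T k := ⟨n, hT.le_apply⟩
  have hj_lt : j < Nat.find hex := by
    by_contra! h
    exact (Nat.find_spec hex).not_gt ((hT.monotone h).trans_lt hj)
  obtain ⟨k, hk⟩ : ∃ k, Nat.find hex = k + 1 := ⟨Nat.find hex - 1, by omega⟩
  refine ⟨k, by omega, ?_, hk ▸ Nat.find_spec hex⟩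
  exact not_le.mp (Nat.find_min hex (by omega))

section GibbsRatio

variable {μ S : ℕ → ℝ} {K D : ℝ}

theorem gibbs_ratio_bounds_of_between (hμ : Antitone μ) (hK : 0 < K) {a n b : ℕ}
    (han : a ≤ n) (hnb : n ≤ b) (hupper : μ a / Real.exp (S a) ≤ K)
    (hlower : K⁻¹ ≤ μ b / Real.exp (S b)) (hSa : S a - S n ≤ D) (hSb : S n - S b ≤ D) :
    K⁻¹ * Real.exp (-D) ≤ μ n / Real.exp (S n) ∧
      μ n / Real.exp (S n) ≤ K * Real.exp D := by
  rw [le_div_iff₀ (Real.exp_pos _)] at hlower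
  rw [div_le_iff₀ (Real.exp_pos _)] at hupper
  constructor
  · calc K⁻¹ * Real.exp (-D)
        ≤ K⁻¹ * Real.exp (S b - S n) := by gcongr; linarith
      _ = K⁻¹ * Real.exp (S b) / Real.exp (S n) := by rw [Real.exp_sub, mul_div_assoc]
      _ ≤ μ n / Real.exp (S n) := by gcongr; exact hlower.trans (hμ hnb)
  · calc μ n / Real.exp (S n)
        ≤ K * Real.exp (S a) / Real.exp (S n) := by gcongr; exact (hμ han).trans hupper
      _ = K * Real.exp (S a - S n) := by rw [Real.exp_sub, mul_div_assoc]
      _ ≤ K * Real.exp D := by gcongr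

theorem eventually_rpow_bounds_of_gibbs_at_returns (hμ : Antitone μ) {T : ℕ → ℕ}
    (hT : StrictMono T) {M κ : ℝ} (hM : 0 ≤ M) (hκ : 0 < κ) (hK : 0 < K)
    (hS : ∀ a b, a ≤ b → |S b - S a| ≤ M * (b - a))
    (hGibbs : ∀ k, K⁻¹ ≤ μ (T k) / Real.exp (S (T k)) ∧
      μ (T k) / Real.exp (S (T k)) ≤ K)
    (hgap : ∀ᶠ k in atTop, (T (k + 1) : ℝ) ≤ T k + κ * Real.log k) :
    ∀ᶠ n : ℕ in atTop, (n : ℝ) ^ (-(κ * (M + 1))) ≤ μ n / Real.exp (S n) ∧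
      μ n / Real.exp (S n) ≤ (n : ℝ) ^ (κ * (M + 1)) := by
  obtain ⟨k₀, hk₀⟩ := eventually_atTop.mp hgap
  have hK_le : ∀ᶠ n : ℕ in atTop, K ≤ (n : ℝ) ^ κ :=
    ((tendsto_rpow_atTop hκ).comp tendsto_natCast_atTop_atTop).eventually_ge_atTop K
  filter_upwards [hK_le, eventually_gt_atTop (T (k₀ + 1))] with n hKn hn
  obtain ⟨k, hk, hTk, hTk1⟩ := hT.exists_between_apply_succ hn
  have hn_pos : (0 : ℝ) < n := Nat.cast_pos.mpr (by omega)
  have hgap_n : (T (k + 1) : ℝ) - T k ≤ κ * Real.log n := by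
    have hkn : k < n := hT.le_apply.trans_lt hTk
    have hlog : Real.log k ≤ Real.log n :=
      Real.log_le_log (by exact_mod_cast (by omega : 0 < k)) (by exact_mod_cast hkn.le)
    nlinarith [hk₀ k (by omega)]
  have hn_le : (n : ℝ) ≤ T (k + 1) := by exact_mod_cast hTk1
  have hTk_le : (T k : ℝ) ≤ n := by exact_mod_cast hTk.le
  have hD : M * ((T (k + 1) : ℝ) - T k) ≤ M * (κ * Real.log n) := by gcongr
  have hSa := (abs_le.mp (hS _ _ hTk.le)).1
  have hSb := (abs_le.mp (hS _ _ hTk1)).1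
  obtain ⟨hlow, hup⟩ := gibbs_ratio_bounds_of_between (D := M * (κ * Real.log n)) hμ hK hTk.le
    hTk1 (hGibbs k).2 (hGibbs (k + 1)).1 (by nlinarith) (by nlinarith)
  have hexp : Real.exp (M * (κ * Real.log n)) = (n : ℝ) ^ (κ * M) := by
    rw [Real.rpow_def_of_pos hn_pos]; ring_nf
  have hsplit : (n : ℝ) ^ (κ * (M + 1)) = (n : ℝ) ^ κ * (n : ℝ) ^ (κ * M) := by
    rw [← Real.rpow_add hn_pos]; ring_nf
  constructor
  · calc (n : ℝ) ^ (-(κ * (M + 1)))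
          = ((n : ℝ) ^ κ)⁻¹ * Real.exp (-(M * (κ * Real.log n))) := by
          rw [Real.rpow_neg hn_pos.le, hsplit, Real.exp_neg, hexp, mul_inv]
      _ ≤ K⁻¹ * Real.exp (-(M * (κ * Real.log n))) := by gcongr
      _ ≤ μ n / Real.exp (S n) := hlow
  · calc μ n / Real.exp (S n) ≤ K * Real.exp (M * (κ * Real.log n)) := hup
      _ ≤ (n : ℝ) ^ (κ * (M + 1)) := by rw [hexp, hsplit]; gcongr

end GibbsRatio

/-- Let `F = f^τ` be an induced system with induced potential
`Φ(x) = S_{τ(x)} φ(x)` for a bounded `φ` (`|φ| ≤ M`), nested cylinders `Z n x`, and a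
Gibbs measure `μΦ`: `K⁻¹ ≤ μΦ(Z_{τ^k(x)}[x]) / e^(S_k Φ(x)) ≤ K` a.e., where
`τ^k(x) = Σ_{j<k} τ(F^j x)`. If a.e. `τ(F^k x) ≤ κ log k` eventually, then a.e. there is
`n₀` such that for all `n ≥ n₀`,
`n^(-κ') ≤ μΦ(Z_n[x]) / e^(S_n φ(x)) ≤ n^κ'` with `κ' = κ(M + 1)`. -/
theorem stmt11 {Y : Type*} [MeasurableSpace Y] (μΦ : Measure Y) [IsProbabilityMeasure μΦ]
    (f : Y → Y) (τ : Y → ℕ) (hτ1 : ∀ x, 1 ≤ τ x)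
    (F : Y → Y) (hF : ∀ x, F x = f^[τ x] x)
    (φ : Y → ℝ) (M : ℝ) (hM : 0 ≤ M) (hφbd : ∀ x, |φ x| ≤ M)
    (Φ : Y → ℝ) (hΦ : ∀ x, Φ x = ∑ i ∈ Finset.range (τ x), φ (f^[i] x))
    (Z : ℕ → Y → Set Y) (hnest : ∀ x, ∀ m n : ℕ, m ≤ n → Z n x ⊆ Z m x)
    (K : ℝ) (hK : 1 ≤ K)
    (hGibbs : ∀ᵐ x ∂μΦ, ∀ k : ℕ,
      K⁻¹ ≤ (μΦ (Z (∑ j ∈ Finset.range k, τ (F^[j] x)) x)).toReal /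
          Real.exp (∑ j ∈ Finset.range k, Φ (F^[j] x)) ∧
        (μΦ (Z (∑ j ∈ Finset.range k, τ (F^[j] x)) x)).toReal /
          Real.exp (∑ j ∈ Finset.range k, Φ (F^[j] x)) ≤ K)
    (κ : ℝ) (hκ : 0 < κ)
    (hgrowth : ∀ᵐ x ∂μΦ, ∃ k₀ : ℕ, ∀ k ≥ k₀, (τ (F^[k] x) : ℝ) ≤ κ * Real.log k) :
    ∀ᵐ x ∂μΦ, ∃ n₀ : ℕ, ∀ n ≥ n₀,
      (n : ℝ) ^ (-(κ * (M + 1))) ≤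
          (μΦ (Z n x)).toReal / Real.exp (∑ i ∈ Finset.range n, φ (f^[i] x)) ∧
        (μΦ (Z n x)).toReal / Real.exp (∑ i ∈ Finset.range n, φ (f^[i] x)) ≤
          (n : ℝ) ^ (κ * (M + 1)) := by
  filter_upwards [hGibbs, hgrowth] with x hGx ⟨k₀, hk₀⟩
  refine eventually_atTop.mp (eventually_rpow_bounds_of_gibbs_at_returns
    (μ := fun n => (μΦ (Z n x)).toReal) (S := fun n => birkhoffSum f φ n x) (K := K)
    (fun a b hab => ENNReal.toReal_mono (measure_ne_top _ _) (measure_mono (hnest x a b hab)))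
    (strictMono_birkhoffSum F hτ1 x) hM hκ (by linarith) ?_ ?_ ?_)
  · intro a b hab
    simpa only [Real.norm_eq_abs] using norm_birkhoffSum_sub_le f (g := φ) hφbd hab x
  · intro k
    rw [← birkhoffSum_induced hF hΦ]
    exact hGx k
  · refine eventually_atTop.mpr ⟨k₀, fun k hk => ?_⟩
    rw [birkhoffSum_succ, Nat.cast_add]
    linarith [hk₀ k hk]
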